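/- arXiv:2408.06199 — 8 statements merged into one kernel-verified Lean document; each statement's English description precedes it below -/
import Mathlib

section
/- Let Σ be a CNF formula over a finite set of propositional variables and let x be a variable. If a non-tautological clause α ∈ Σ is blocked by a literal ℓ ∈ α with Var(ℓ) = x, then ∃x.Σ is logically equivalent to ∃x.Σ', where Σ' = Σ \ {α}; that is, for every interpretation ω of the variables other than x, some extension of ω assigning a value to x satisfies Σ if and only if some extension of ω assigning a value to x satisfies Σ'. -/
namespace BCE

variable {V : Type*} [DecidableEq V]

/-- The complementary literal: a literal is a pair (variable, polarity). -/
def negLit (l : V × Bool) : V × Bool := (l.1, !l.2)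

/-- An interpretation `ω` satisfies a literal. -/
def LitSat (ω : V → Bool) (l : V × Bool) : Prop := ω l.1 = l.2

/-- An interpretation satisfies a clause (a finite set of literals) if it makes
some literal of it true. -/
def ClauseSat (ω : V → Bool) (c : Finset (V × Bool)) : Prop := ∃ l ∈ c, LitSat ω l

/-- An interpretation satisfies a CNF formula (a finite set of clauses) if it
satisfies every clause. -/
def CnfSat (ω : V → Bool) (S : Finset (Finset (V × Bool))) : Prop := ∀ c ∈ S, ClauseSat ω c

/-- A clause is a tautology if it contains both `x` and `¬x` for some variable. -/
def Tauto (c : Finset (V × Bool)) : Prop := ∃ x : V, (x, true) ∈ c ∧ (x, false) ∈ c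

/-- The resolvent of `c₁` and `c₂` on a literal `l` (with `l ∈ c₁`, `l̄ ∈ c₂`):
`(c₁ \ {l}) ∪ (c₂ \ {l̄})`. -/
def resolve (l : V × Bool) (c₁ c₂ : Finset (V × Bool)) : Finset (V × Bool) :=
  c₁.erase l ∪ c₂.erase (negLit l)

/-- A literal `l ∈ c` blocks the clause `c` with respect to the CNF `S` if for
every clause `c' ∈ S` containing `l̄`, the resolvent of `c` and `c'` on `l` is a
tautology. -/
def Blocked (S : Finset (Finset (V × Bool))) (c : Finset (V × Bool)) (l : V × Bool) : Prop :=
  ∀ c' ∈ S, negLit l ∈ c' → Tauto (resolve l c c')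

/-- Conditioning of a CNF by a literal `l`: remove every clause containing `l`
and remove `l̄` from the remaining clauses. -/
def condition (S : Finset (Finset (V × Bool))) (l : V × Bool) : Finset (Finset (V × Bool)) :=
  (S.filter (fun c => l ∉ c)).image (fun c => c.erase (negLit l))

/-- If a non-tautological clause `α ∈ Σ` is blocked by a literal `ℓ ∈ α`
with `Var(ℓ) = x`, then `∃x.Σ` is logically equivalent to `∃x.(Σ \ {α})`: for every
interpretation `ω` of the variables other than `x`, some extension of `ω` assigning a
value to `x` satisfies `Σ` iff some such extension satisfies `Σ \ {α}`. -/
theorem bce_preserves_exists_single_var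
    (S : Finset (Finset (V × Bool))) (x : V)
    (α : Finset (V × Bool)) (hαS : α ∈ S) (hnt : ¬ Tauto α)
    (l : V × Bool) (hlα : l ∈ α) (hvar : l.1 = x) (hb : Blocked S α l) :
    ∀ ω : V → Bool,
      (∃ b : Bool, CnfSat (Function.update ω x b) S) ↔
      (∃ b : Bool, CnfSat (Function.update ω x b) (S.erase α)) := by
  obtain ⟨l1, l2⟩ := l
  simp only at hvar
  subst hvar
  intro ω
  constructor
  · rintro ⟨b, hsat⟩
    exact ⟨b, fun c hc => hsat c (Finset.mem_of_mem_erase hc)⟩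
  · rintro ⟨b, hsat⟩
    by_cases hα : ClauseSat (Function.update ω l1 b) α
    · refine ⟨b, fun c hc => ?_⟩
      by_cases hcα : c = α
      · exact hcα ▸ hα
      · exact hsat c (Finset.mem_erase.mpr ⟨hcα, hc⟩)
    · refine ⟨!b, fun c hc => ?_⟩
      have hωl : ¬ LitSat (Function.update ω l1 b) (l1, l2) := fun h => hα ⟨_, hlα, h⟩
      have hb2 : b = !l2 := by
        simp only [LitSat, Function.update_self] at hωl
        cases l2 <;> cases b <;> simp_all
      have hnew : Function.update ω l1 (!b) l1 = l2 := by simp [hb2]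
      have hnlα : (l1, !l2) ∉ α := by
        intro h
        exact hnt ⟨l1, by cases l2 <;> simp_all⟩
      have key : ∀ m ∈ α.erase (l1, l2),
          LitSat (Function.update ω l1 (!b)) (negLit m) := by
        intro m hm
        obtain ⟨m1, m2⟩ := m
        have hmα := Finset.mem_of_mem_erase hm
        have hml : (m1, m2) ≠ (l1, l2) := Finset.ne_of_mem_erase hm
        have hmx : m1 ≠ l1 := by
          intro h
          subst h
          cases m2 <;> cases l2 <;> simp_all
        have hfalse : ¬ LitSat (Function.update ω l1 b) (m1, m2) :=
          fun h => hα ⟨_, hmα, h⟩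
        simp only [LitSat, negLit, Function.update_of_ne hmx] at hfalse ⊢
        cases m2 <;> simp_all
      by_cases hcα : c = α
      · subst hcα
        exact ⟨(l1, l2), hlα, by simpa [LitSat] using hnew⟩
      · have hcsat : ClauseSat (Function.update ω l1 b) c :=
          hsat c (Finset.mem_erase.mpr ⟨hcα, hc⟩)
        by_cases hnl : (l1, !l2) ∈ c
        · obtain ⟨y, hy1, hy2⟩ := hb c hc (by simpa [negLit] using hnl)
          rcases Finset.mem_union.mp hy1 with h1 | h1 <;>
            rcases Finset.mem_union.mp hy2 with h2 | h2
          · exact absurd ⟨y, Finset.mem_of_mem_erase h1, Finset.mem_of_mem_erase h2⟩ hnt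
          · have := key (y, true) h1
            exact ⟨(y, false), Finset.mem_of_mem_erase h2, by simpa [negLit] using this⟩
          · have := key (y, false) h2
            exact ⟨(y, true), Finset.mem_of_mem_erase h1, by simpa [negLit] using this⟩
          · cases hy : Function.update ω l1 (!b) y
            · exact ⟨(y, false), Finset.mem_of_mem_erase h2, hy⟩
            · exact ⟨(y, true), Finset.mem_of_mem_erase h1, hy⟩
        · obtain ⟨⟨m1, m2⟩, hmc, hmsat⟩ := hcsat
          by_cases hmx : m1 = l1
          · subst hmx
            have hm2 : m2 = l2 := by
              by_contra hne
              apply hnl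
              cases m2 <;> cases l2 <;> simp_all
            subst hm2
            exact ⟨(m1, m2), hmc, by simpa [LitSat] using hnew⟩
          · exact ⟨(m1, m2), hmc, by
              simpa [LitSat, Function.update_of_ne hmx] using hmsat⟩

end BCE
end

section
/- Let Σ be a CNF formula over a finite set of propositional variables and let X be a set of variables. If a non-tautological clause α ∈ Σ is blocked by a literal ℓ ∈ α with Var(ℓ) ∈ X, then ∃X.Σ is logically equivalent to ∃X.Σ', where Σ' = Σ \ {α}; that is, for every interpretation ω of the variables outside X, some extension of ω assigning values to the variables of X satisfies Σ if and only if some such extension satisfies Σ'. -/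
namespace BCE

variable {V : Type*} [DecidableEq V]

/-- If a non-tautological clause `α ∈ Σ` is blocked by a literal `ℓ ∈ α`
with `Var(ℓ) ∈ X`, then `∃X.Σ` is logically equivalent to `∃X.(Σ \ {α})`: for every
interpretation `ω` of the variables outside `X`, some extension of `ω` assigning values
to the variables of `X` satisfies `Σ` iff some such extension satisfies `Σ \ {α}`. -/
theorem bce_preserves_exists_var_set
    (S : Finset (Finset (V × Bool))) (X : Set V)
    (α : Finset (V × Bool)) (hαS : α ∈ S) (hnt : ¬ Tauto α)
    (l : V × Bool) (hlα : l ∈ α) (hvar : l.1 ∈ X) (hb : Blocked S α l) :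
    ∀ ω : V → Bool,
      (∃ ω' : V → Bool, (∀ v ∉ X, ω' v = ω v) ∧ CnfSat ω' S) ↔
      (∃ ω' : V → Bool, (∀ v ∉ X, ω' v = ω v) ∧ CnfSat ω' (S.erase α)) := by
  intro ω
  have bne : ∀ a b : Bool, a ≠ b → a = !b := by decide
  constructor
  · rintro ⟨ω', h1, h2⟩
    exact ⟨ω', h1, fun c hc => h2 c (Finset.mem_of_mem_erase hc)⟩
  · rintro ⟨ω', h1, h2⟩
    by_cases hα : ClauseSat ω' α
    · refine ⟨ω', h1, fun c hc => ?_⟩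
      by_cases hcα : c = α
      · exact hcα ▸ hα
      · exact h2 c (Finset.mem_erase.mpr ⟨hcα, hc⟩)
    · have hαf : ∀ q ∈ α, ω' q.1 = !q.2 := by
        intro q hq
        exact bne _ _ (fun h => hα ⟨q, hq, h⟩)
      set ω'' := Function.update ω' l.1 l.2 with hω''
      refine ⟨ω'', fun v hv => ?_, fun c hc => ?_⟩
      · rw [hω'', Function.update_apply]
        split_ifs with h
        · exact absurd (h ▸ hvar) hv
        · exact h1 v hv
      · by_cases hcα : c = α
        · refine ⟨l, hcα ▸ hlα, ?_⟩
          rw [LitSat, hω'', Function.update_self]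
        · have hcS : c ∈ S.erase α := Finset.mem_erase.mpr ⟨hcα, hc⟩
          by_contra hfail
          have hcf : ∀ q ∈ c, ω'' q.1 = !q.2 := by
            intro q hq
            exact bne _ _ (fun h => hfail ⟨q, hq, h⟩)
          -- the satisfying literal of c under ω' must be negLit l
          obtain ⟨p, hpc, hps⟩ := h2 c hcS
          have hpneg : p = negLit l := by
            have hp1 : p.1 = l.1 := by
              by_contra hne
              have : ω'' p.1 = ω' p.1 := by
                rw [hω'', Function.update_apply, if_neg hne]
              have := hcf p hpc
              rw [‹ω'' p.1 = ω' p.1›, hps] at this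
              simp at this
            have hp2 : p.2 = !l.2 := by
              by_contra hne
              have hp2' : p.2 = l.2 := by
                cases hl2 : l.2 <;> cases hp : p.2 <;> simp_all
              have : ω'' p.1 = p.2 := by
                rw [hω'', hp1, Function.update_self, hp2']
              have h2' := hcf p hpc
              rw [this] at h2'
              simp at h2'
            have : p = (l.1, !l.2) := Prod.ext hp1 hp2
            simpa [negLit] using this
          have hneg : negLit l ∈ c := hpneg ▸ hpc
          obtain ⟨x, hxt, hxf⟩ := hb c hc hneg
          -- key: every literal of the resolvent is falsified by ω''
          have key : ∀ q ∈ resolve l α c, ω'' q.1 = !q.2 := by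
            intro q hq
            rcases Finset.mem_union.mp hq with h | h
            · obtain ⟨hql, hqα⟩ := Finset.mem_erase.mp h
              have hq1 : q.1 ≠ l.1 := by
                intro h1
                by_cases h2' : q.2 = l.2
                · exact hql (Prod.ext h1 h2')
                · have : q = negLit l := by
                    have : q.2 = !l.2 := by
                      cases hl2 : l.2 <;> cases hp : q.2 <;> simp_all
                    exact Prod.ext h1 (by simpa [negLit] using this)
                  apply hnt
                  refine ⟨l.1, ?_, ?_⟩ <;> cases hl2 : l.2
                  · rw [this] at hqα; simpa [negLit, hl2] using hqα
                  · have := hlα; rw [show l = (l.1, l.2) from rfl, hl2] at this; exact this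
                  · have := hlα; rw [show l = (l.1, l.2) from rfl, hl2] at this; exact this
                  · rw [this] at hqα; simpa [negLit, hl2] using hqα
              rw [hω'', Function.update_apply, if_neg hq1]
              exact hαf q hqα
            · exact hcf q (Finset.mem_of_mem_erase h)
          have ht := key _ hxt
          have hf := key _ hxf
          simp at ht hf
          rw [ht] at hf
          exact absurd hf (by simp)

end BCE
end

section
/- Let Σ be a CNF formula over a finite set V of propositional variables and let X ⊆ V. If a non-tautological clause α ∈ Σ is blocked by a literal ℓ ∈ α with Var(ℓ) ∈ X, then the projected model count of Σ with respect to X is preserved by removing α: the number of interpretations of the variables in V \ X that extend to a model of Σ equals the number of interpretations of V \ X that extend to a model of Σ \ {α}. -/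
namespace BCE

variable {V : Type*} [DecidableEq V]

lemma taut_of_l_negl {l : V × Bool} {c : Finset (V × Bool)}
    (h1 : l ∈ c) (h2 : negLit l ∈ c) : Tauto c := by
  obtain ⟨x, b⟩ := l
  cases b
  · exact ⟨x, h2, h1⟩
  · exact ⟨x, h1, h2⟩

lemma key {S : Finset (Finset (V × Bool))} {α : Finset (V × Bool)}
    (hαS : α ∈ S) (hnt : ¬ Tauto α) {l : V × Bool} (hlα : l ∈ α)
    (hb : Blocked S α l) (ω : V → Bool)
    (h : CnfSat ω (S.erase α)) (hna : ¬ ClauseSat ω α) :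
    CnfSat (Function.update ω l.1 l.2) S := by
  -- facts about literals of α
  have hA : ∀ x b, (x, b) ∈ α.erase l → ω x = !b ∧ x ≠ l.1 := by
    intro x b hxb
    have hxα : (x, b) ∈ α := Finset.mem_of_mem_erase hxb
    have hns : ω x ≠ b := fun hs => hna ⟨(x, b), hxα, hs⟩
    refine ⟨by cases b <;> simp_all, ?_⟩
    rintro rfl
    have hne : (l.1, b) ≠ l := Finset.ne_of_mem_erase hxb
    have : b = !l.2 := by
      rcases Bool.eq_or_eq_not b l.2 with h' | h'
      · exact absurd (by rw [h', Prod.mk.eta]) hne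
      · exact h'
    subst this
    exact hnt (taut_of_l_negl hlα (by simpa [negLit] using hxα))
  intro c hc
  by_cases hcα : c = α
  · exact ⟨l, hcα ▸ hlα, by simp [LitSat]⟩
  have hce : c ∈ S.erase α := Finset.mem_erase.2 ⟨hcα, hc⟩
  by_cases hneg : negLit l ∈ c
  · -- blocked case: resolvent is tautology
    obtain ⟨x, h1, h2⟩ := hb c hc hneg
    rcases Finset.mem_union.1 h1 with h1 | h1 <;> rcases Finset.mem_union.1 h2 with h2 | h2
    · exact absurd ⟨x, Finset.mem_of_mem_erase h1, Finset.mem_of_mem_erase h2⟩ hnt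
    · obtain ⟨hω, hxl⟩ := hA x true h1
      exact ⟨(x, false), Finset.mem_of_mem_erase h2, by simp [LitSat, Function.update_of_ne hxl, hω]⟩
    · obtain ⟨hω, hxl⟩ := hA x false h2
      exact ⟨(x, true), Finset.mem_of_mem_erase h1, by simp [LitSat, Function.update_of_ne hxl, hω]⟩
    · by_cases hx : Function.update ω l.1 l.2 x = true
      · exact ⟨(x, true), Finset.mem_of_mem_erase h1, hx⟩
      · exact ⟨(x, false), Finset.mem_of_mem_erase h2, by simpa [LitSat] using hx⟩
  · -- c satisfied by ω via a literal not touching l.1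
    obtain ⟨m, hm, hsat⟩ := h c hce
    have hml : m.1 ≠ l.1 := by
      rintro hml
      rcases Bool.eq_or_eq_not m.2 l.2 with h' | h'
      · -- m = l, so ω satisfies l, so ω satisfies α: contradiction
        exact hna ⟨l, hlα, by rw [LitSat, ← hml, ← h']; exact hsat⟩
      · -- m = negLit l ∈ c: contradiction
        exact hneg (by rwa [show negLit l = m from (Prod.ext hml.symm h'.symm)])
    exact ⟨m, hm, by rwa [LitSat, Function.update_of_ne hml]⟩

/-- If a non-tautological clause `α ∈ Σ` is blocked by a literal `ℓ ∈ α`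
with `Var(ℓ) ∈ X`, then the projected model count of `Σ` with respect to `X` equals the
projected model count of `Σ \ {α}` with respect to `X`: the number of interpretations of
the variables in `V \ X` that extend to a model of `Σ` equals the number of those that
extend to a model of `Σ \ {α}`. -/
theorem bce_preserves_projected_count
    [Fintype V] (X : Finset V)
    (S : Finset (Finset (V × Bool)))
    (α : Finset (V × Bool)) (hαS : α ∈ S) (hnt : ¬ Tauto α)
    (l : V × Bool) (hlα : l ∈ α) (hvar : l.1 ∈ X) (hb : Blocked S α l) :
    Nat.card {ω : {v : V // v ∉ X} → Bool //
        ∃ ω' : V → Bool, (∀ v : {v : V // v ∉ X}, ω' v = ω v) ∧ CnfSat ω' S} =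
    Nat.card {ω : {v : V // v ∉ X} → Bool //
        ∃ ω' : V → Bool, (∀ v : {v : V // v ∉ X}, ω' v = ω v) ∧ CnfSat ω' (S.erase α)} := by
  refine Nat.card_congr (Equiv.subtypeEquivRight fun ω => ⟨?_, ?_⟩)
  · rintro ⟨ω', hω', hsat⟩
    exact ⟨ω', hω', fun c hc => hsat c (Finset.mem_of_mem_erase hc)⟩
  · rintro ⟨ω', hω', hsat⟩
    by_cases hα : ClauseSat ω' α
    · refine ⟨ω', hω', fun c hc => ?_⟩
      by_cases hcα : c = α
      · exact hcα ▸ hα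
      · exact hsat c (Finset.mem_erase.2 ⟨hcα, hc⟩)
    · refine ⟨Function.update ω' l.1 l.2, fun v => ?_, key hαS hnt hlα hb ω' hsat hα⟩
      rw [Function.update_of_ne (fun h => v.2 (by rw [h]; exact hvar))]
      exact hω' v


end BCE
end

section
/- Let Σ be a CNF formula, x a variable, and α ∈ Σ a non-tautological clause blocked by the literal x ∈ α in Σ; set Σ' = Σ \ {α}. If an interpretation ω of the variables other than x satisfies ∃x.Σ', then ω satisfies ∃x.Σ; that is, if some extension of ω assigning a value to x satisfies Σ \ {α}, then some extension of ω assigning a value to x satisfies Σ. -/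
namespace BCE

variable {V : Type*} [DecidableEq V]

/-- If `α ∈ Σ` is a non-tautological clause blocked by the (positive)
literal `x ∈ α` in `Σ`, and an interpretation `ω` of the variables other than `x`
satisfies `∃x.(Σ \ {α})`, then `ω` satisfies `∃x.Σ`. -/
theorem bce_exists_reverse_entailment
    (S : Finset (Finset (V × Bool))) (x : V)
    (α : Finset (V × Bool)) (hαS : α ∈ S) (hnt : ¬ Tauto α)
    (hlα : (x, true) ∈ α) (hb : Blocked S α (x, true)) :
    ∀ ω : V → Bool,
      (∃ b : Bool, CnfSat (Function.update ω x b) (S.erase α)) →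
      (∃ b : Bool, CnfSat (Function.update ω x b) S) := by
  rintro ω ⟨b, hsat⟩
  by_cases hα : ClauseSat (Function.update ω x b) α
  · exact ⟨b, fun c hc => by
      by_cases h : c = α
      · exact h ▸ hα
      · exact hsat c (Finset.mem_erase.mpr ⟨h, hc⟩)⟩
  · have hfalse : ∀ l ∈ α, Function.update ω x b l.1 ≠ l.2 := by
      intro l hl hls; exact hα ⟨l, hl, hls⟩
    have hb0 : b = false := by
      have := hfalse (x, true) hlα
      simpa [Function.update_self] using this
    subst hb0
    refine ⟨true, fun c hc => ?_⟩
    by_cases hcα : c = α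
    · exact hcα ▸ ⟨(x, true), hlα, by simp [LitSat]⟩
    · obtain ⟨l, hlc, hls⟩ := hsat c (Finset.mem_erase.mpr ⟨hcα, hc⟩)
      by_cases hlx : l.1 = x
      · have hl2 : l.2 = false := by
          have h1 : Function.update ω x false l.1 = l.2 := hls
          rw [hlx, Function.update_self] at h1; exact h1.symm
        have hlv : l = (x, false) := by cases l; simp_all
        have hneg : negLit (x, true) ∈ c := by
          rw [hlv] at hlc; simpa [negLit] using hlc
        obtain ⟨y, hy1, hy2⟩ := hb c hc hneg
        simp only [resolve, Finset.mem_union] at hy1 hy2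
        rcases hy1 with hy1 | hy1 <;> rcases hy2 with hy2 | hy2
        · exact absurd ⟨y, Finset.mem_of_mem_erase hy1,
            Finset.mem_of_mem_erase hy2⟩ hnt
        · -- (y,true) ∈ α, (y,false) ∈ c
          have hyx : y ≠ x := by
            intro h; subst h
            exact (Finset.ne_of_mem_erase hy1) rfl
          have : Function.update ω x false y ≠ true :=
            hfalse (y, true) (Finset.mem_of_mem_erase hy1)
          have hωy : ω y = false := by
            simpa [Function.update_of_ne hyx] using this
          exact ⟨(y, false), Finset.mem_of_mem_erase hy2,
            by simp [LitSat, Function.update_of_ne hyx, hωy]⟩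
        · -- (y,true) ∈ c, (y,false) ∈ α
          have hyx : y ≠ x := by
            intro h; subst h
            have := hfalse (y, false) (Finset.mem_of_mem_erase hy2)
            simp [Function.update_self] at this
          have : Function.update ω x false y ≠ false :=
            hfalse (y, false) (Finset.mem_of_mem_erase hy2)
          have hωy : ω y = true := by
            simpa [Function.update_of_ne hyx] using this
          exact ⟨(y, true), Finset.mem_of_mem_erase hy1,
            by simp [LitSat, Function.update_of_ne hyx, hωy]⟩
        · -- both in c
          have hyx : y ≠ x := by
            intro h; subst h
            exact (Finset.ne_of_mem_erase hy2) (by simp [negLit])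
          cases hωy : ω y
          · exact ⟨(y, false), Finset.mem_of_mem_erase hy2,
              by simp [LitSat, Function.update_of_ne hyx, hωy]⟩
          · exact ⟨(y, true), Finset.mem_of_mem_erase hy1,
              by simp [LitSat, Function.update_of_ne hyx, hωy]⟩
      · exact ⟨l, hlc, by
          unfold LitSat at hls ⊢
          rwa [Function.update_of_ne hlx] at hls ⊢⟩

end BCE
end

section
/- Let Σ be a CNF formula, x a variable, and α a non-tautological clause blocked by the literal x ∈ α in Σ. Let β ∈ Σ be a clause with ¬x ∈ β, and let ω be an interpretation that falsifies β_{|x} (i.e., ω makes every literal of β \ {¬x} false). Then ω satisfies α_{|¬x} (i.e., ω makes some literal of α \ {x} true). -/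
namespace BCE

variable {V : Type*} [DecidableEq V]

/-- Let `α` be a non-tautological clause blocked by the literal `x ∈ α` in
`Σ`, let `β ∈ Σ` contain `¬x`, and let `ω` be an interpretation falsifying `β_{|x}`,
i.e. making every literal of `β \ {¬x}` false. Then `ω` satisfies `α_{|¬x}`, i.e. makes
some literal of `α \ {x}` true. -/
theorem blocked_clause_conditioned_satisfied
    (S : Finset (Finset (V × Bool))) (x : V)
    (α : Finset (V × Bool)) (hnt : ¬ Tauto α)
    (hxα : (x, true) ∈ α) (hb : Blocked S α (x, true))
    (β : Finset (V × Bool)) (hβS : β ∈ S) (hxβ : (x, false) ∈ β)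
    (ω : V → Bool) (hfalse : ∀ l ∈ β.erase (x, false), ¬ LitSat ω l) :
    ∃ l ∈ α.erase (x, true), LitSat ω l := by
  obtain ⟨y, hyt, hyf⟩ := hb β hβS (by simpa [negLit] using hxβ)
  simp only [resolve, negLit, Finset.mem_union] at hyt hyf
  -- resolve (x,true) α β = α.erase (x,true) ∪ β.erase (x,false)
  have hne : negLit (x, true) = (x, false) := by simp [negLit]
  rcases hyt with hyt | hyt <;> rcases hyf with hyf | hyf
  · exact absurd ⟨y, Finset.mem_of_mem_erase hyt, Finset.mem_of_mem_erase hyf⟩ hnt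
  · refine ⟨(y, true), hyt, ?_⟩
    simp only [Bool.not_true] at hyf
    have := hfalse _ hyf
    simp only [LitSat] at this ⊢
    exact Bool.eq_true_of_not_eq_false this
  · refine ⟨(y, false), hyf, ?_⟩
    simp only [Bool.not_true] at hyt
    have := hfalse _ hyt
    simp only [LitSat] at this ⊢
    exact Bool.eq_false_of_not_eq_true this
  · simp only [Bool.not_true] at hyt hyf
    have h1 := hfalse _ hyt
    have h2 := hfalse _ hyf
    simp [LitSat] at h1 h2
    simp [h1] at h2


end BCE
end

section
/- Let Σ be a CNF formula, x a variable, α ∈ Σ a non-tautological clause blocked by the literal x ∈ α in Σ, and Σ' = Σ \ {α}. Let ω be an interpretation of the variables other than x such that ω satisfies Σ'_{|¬x} but does not satisfy Σ'_{|x}. Then ω satisfies Σ_{|¬x}. -/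
namespace BCE

variable {V : Type*} [DecidableEq V]

/-- Let `α ∈ Σ` be a non-tautological clause blocked by the literal
`x ∈ α` in `Σ`, and `Σ' = Σ \ {α}`. If an interpretation `ω` of the variables other
than `x` satisfies `Σ'_{|¬x}` but does not satisfy `Σ'_{|x}`, then `ω` satisfies
`Σ_{|¬x}`. -/
theorem blocked_clause_conditioning_neg
    (S : Finset (Finset (V × Bool))) (x : V)
    (α : Finset (V × Bool)) (hαS : α ∈ S) (hnt : ¬ Tauto α)
    (hxα : (x, true) ∈ α) (hb : Blocked S α (x, true))
    (ω : V → Bool)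
    (hneg : CnfSat ω (condition (S.erase α) (x, false)))
    (hpos : ¬ CnfSat ω (condition (S.erase α) (x, true))) :
    CnfSat ω (condition S (x, false)) := by
  -- extract the falsified clause from hpos
  rw [CnfSat] at hpos
  push_neg at hpos
  obtain ⟨c, hc, hcfal⟩ := hpos
  rw [condition, Finset.mem_image] at hc
  obtain ⟨c', hc', rfl⟩ := hc
  rw [Finset.mem_filter] at hc'
  obtain ⟨hc'S, hxc'⟩ := hc'
  have hc'S' : c' ∈ S := Finset.mem_of_mem_erase hc'S
  have hc'ne : c' ≠ α := Finset.ne_of_mem_erase hc'S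
  have hneglit : negLit ((x : V), true) = (x, false) := rfl
  have hneglit2 : negLit ((x : V), false) = (x, true) := rfl
  rw [hneglit] at hcfal
  -- case on whether (x,false) ∈ c'
  by_cases hxf : ((x : V), false) ∈ c'
  · -- blocked: resolvent is a tautology
    have htaut := hb c' hc'S' (by rw [hneglit]; exact hxf)
    obtain ⟨y, hy1, hy2⟩ := htaut
    rw [resolve, hneglit] at hy1 hy2
    -- ω falsifies every literal of c'.erase (x,false)
    have hfal : ∀ l ∈ c'.erase ((x : V), false), ¬ LitSat ω l := by
      intro l hl hsat
      exact hcfal ⟨l, hl, hsat⟩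
    have hsatα : ClauseSat ω (α.erase ((x : V), true)) := by
      rcases Finset.mem_union.mp hy1 with h1 | h1 <;>
        rcases Finset.mem_union.mp hy2 with h2 | h2
      · exact absurd ⟨y, Finset.mem_of_mem_erase h1, Finset.mem_of_mem_erase h2⟩ hnt
      · refine ⟨(y, true), h1, ?_⟩
        have := hfal _ h2
        simp only [LitSat] at this ⊢
        simpa using this
      · refine ⟨(y, false), h2, ?_⟩
        have := hfal _ h1
        simp only [LitSat] at this ⊢
        simpa using this
      · have t1 := hfal _ h1
        have t2 := hfal _ h2
        simp only [LitSat] at t1 t2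
        rcases Bool.eq_false_or_eq_true (ω y) with h | h <;> simp_all
    intro β hβ
    rw [condition, Finset.mem_image] at hβ
    obtain ⟨γ, hγ, rfl⟩ := hβ
    rw [Finset.mem_filter] at hγ
    obtain ⟨hγS, hxγ⟩ := hγ
    rw [hneglit2]
    by_cases hγα : γ = α
    · subst hγα; exact hsatα
    · exact hneg _ (by
        rw [condition, Finset.mem_image]
        exact ⟨γ, Finset.mem_filter.mpr ⟨Finset.mem_erase.mpr ⟨hγα, hγS⟩, hxγ⟩, by rw [hneglit2]⟩)
  · -- c' contains neither x-literal: contradiction with hneg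
    exfalso
    have h1 : c'.erase ((x : V), true) ∈ condition (S.erase α) (x, false) := by
      rw [condition, Finset.mem_image]
      exact ⟨c', Finset.mem_filter.mpr ⟨hc'S, hxf⟩, by rw [hneglit2]⟩
    obtain ⟨l, hl, hls⟩ := hneg _ h1
    exact hcfal ⟨l, Finset.mem_erase.mpr
      ⟨fun h => hxf (h ▸ Finset.mem_of_mem_erase hl), Finset.mem_of_mem_erase hl⟩, hls⟩

end BCE
end

section
/- Let Σ be a CNF formula, ℓ a literal, and α ∈ Σ a clause with ℓ̄ ∈ α. Suppose that α is not blocked in Σ on any literal of α \ {ℓ̄}; that is, for every literal ℓ' ∈ α \ {ℓ̄} there exists a clause α' ∈ Σ with ℓ̄' ∈ α' such that the resolvent α ⊕ α' on ℓ' is not a tautology. Then the shortened clause α \ {ℓ̄}, which belongs to the conditioned formula Σ_{|ℓ}, is not blocked in Σ_{|ℓ} on any of its literals: for every literal ℓ' ∈ α \ {ℓ̄} there exists a clause β ∈ Σ_{|ℓ} with ℓ̄' ∈ β such that the resolvent (α \ {ℓ̄}) ⊕ β on ℓ' is not a tautology. -/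
namespace BCE

variable {V : Type*} [DecidableEq V]

/-- Let `α ∈ Σ` be a clause with `ℓ̄ ∈ α` which is not blocked in `Σ` on
any literal of `α \ {ℓ̄}`. Then the shortened clause `α \ {ℓ̄}` belongs to the
conditioned formula `Σ_{|ℓ}` and is not blocked in `Σ_{|ℓ}` on any of its literals: for
every literal `ℓ' ∈ α \ {ℓ̄}` there is a clause `β ∈ Σ_{|ℓ}` with `ℓ̄' ∈ β` such that
the resolvent `(α \ {ℓ̄}) ⊕ β` on `ℓ'` is not a tautology. -/
theorem conditioning_preserves_unblocked
    (S : Finset (Finset (V × Bool))) (l : V × Bool)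
    (α : Finset (V × Bool)) (hαS : α ∈ S) (hlα : negLit l ∈ α) (hlnα : l ∉ α)
    (hnb : ∀ l' ∈ α.erase (negLit l),
      ∃ α' ∈ S, negLit l' ∈ α' ∧ ¬ Tauto (resolve l' α α')) :
    α.erase (negLit l) ∈ condition S l ∧
    ∀ l' ∈ α.erase (negLit l),
      ∃ β ∈ condition S l, negLit l' ∈ β ∧ ¬ Tauto (resolve l' (α.erase (negLit l)) β) := by
  have negLit_inj : ∀ a b : V × Bool, negLit a = negLit b → a = b := by
    rintro ⟨x, bx⟩ ⟨y, by'⟩ h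
    simp only [negLit, Prod.mk.injEq] at h
    cases bx <;> cases by' <;> simp_all
  have tauto_of_pair : ∀ (c : Finset (V × Bool)) (m : V × Bool),
      m ∈ c → negLit m ∈ c → Tauto c := by
    rintro c ⟨x, b⟩ h1 h2
    cases b
    · exact ⟨x, by simpa [negLit] using h2, h1⟩
    · exact ⟨x, h1, by simpa [negLit] using h2⟩
  refine ⟨Finset.mem_image.2 ⟨α, Finset.mem_filter.2 ⟨hαS, hlnα⟩, rfl⟩, ?_⟩
  intro l' hl'
  obtain ⟨hne, hl'α⟩ := Finset.mem_erase.1 hl'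
  obtain ⟨α', hα'S, hnl'α', hnt⟩ := hnb l' hl'
  have hl'nel : l' ≠ l := fun h => hlnα (h ▸ hl'α)
  have hlnα' : l ∉ α' := by
    intro hl
    apply hnt
    apply tauto_of_pair _ l
    · apply Finset.mem_union_right
      refine Finset.mem_erase.2 ⟨?_, hl⟩
      intro h
      apply hne
      have := congrArg negLit h
      simpa [negLit] using this.symm
    · exact Finset.mem_union_left _ (Finset.mem_erase.2 ⟨fun h => hne h.symm, hlα⟩)
  refine ⟨α'.erase (negLit l),
    Finset.mem_image.2 ⟨α', Finset.mem_filter.2 ⟨hα'S, hlnα'⟩, rfl⟩,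
    Finset.mem_erase.2 ⟨fun h => hl'nel (negLit_inj _ _ h), hnl'α'⟩, ?_⟩
  intro ht
  apply hnt
  obtain ⟨x, h1, h2⟩ := ht
  have hsub : resolve l' (α.erase (negLit l)) (α'.erase (negLit l)) ⊆ resolve l' α α' := by
    apply Finset.union_subset_union <;>
      exact Finset.erase_subset_erase _ (Finset.erase_subset _ _)
  exact ⟨x, hsub h1, hsub h2⟩

end BCE
end

section
/- Let Σ be a CNF formula over a finite set V of propositional variables and let X ⊆ V. Suppose Σ = Σ₀, Σ₁, …, Σₙ is a finite sequence of CNF formulas such that for each i < n, Σ_{i+1} = Σᵢ \ {αᵢ} for some non-tautological clause αᵢ ∈ Σᵢ that is blocked in Σᵢ by a literal ℓᵢ ∈ αᵢ with Var(ℓᵢ) ∈ X. Then ∃X.Σ is logically equivalent to ∃X.Σₙ; in particular, the projected model count of Σ with respect to X equals that of Σₙ. -/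
namespace BCE

variable {V : Type*} [DecidableEq V]

lemma key_s8 {S : Finset (Finset (V × Bool))} {α : Finset (V × Bool)} {l : V × Bool}
    (hα : α ∈ S) (hl : l ∈ α) (ht : ¬ Tauto α) (hb : Blocked S α l)
    (ω : V → Bool) (hω : CnfSat ω (S.erase α)) :
    ∃ ω', (∀ v, v ≠ l.1 → ω' v = ω v) ∧ CnfSat ω' S := by
  by_cases h : ClauseSat ω α
  · refine ⟨ω, fun _ _ => rfl, fun c hc => ?_⟩
    rcases eq_or_ne c α with rfl | hne
    · exact h
    · exact hω c (Finset.mem_erase.mpr ⟨hne, hc⟩)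
  · have hfal : ∀ m ∈ α, ω m.1 ≠ m.2 := by
      intro m hm hmv; exact h ⟨m, hm, hmv⟩
    refine ⟨Function.update ω l.1 l.2, fun v hv => Function.update_of_ne hv _ _, ?_⟩
    intro c hc
    by_cases hcl : l ∈ c
    · exact ⟨l, hcl, by simp [LitSat]⟩
    by_cases hcn : negLit l ∈ c
    · obtain ⟨x, hx1, hx0⟩ := hb c hc hcn
      rw [resolve, Finset.mem_union] at hx1 hx0
      rcases hx1 with hx1 | hx1 <;> rcases hx0 with hx0 | hx0
      · exact absurd ⟨x, Finset.mem_of_mem_erase hx1, Finset.mem_of_mem_erase hx0⟩ ht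
      · -- (x,true) ∈ α.erase l, (x,false) ∈ c.erase (negLit l)
        have hxne : x ≠ l.1 := by
          intro hxl
          have h1 : (x, false) ≠ l := fun he => hcl (he ▸ Finset.mem_of_mem_erase hx0)
          have h2 : (x, false) ≠ negLit l := Finset.ne_of_mem_erase hx0
          rcases Bool.eq_false_or_eq_true l.2 with h | h
          · exact h2 (Prod.ext hxl (by simp [negLit, h]))
          · exact h1 (Prod.ext hxl h.symm)
        refine ⟨(x, false), Finset.mem_of_mem_erase hx0, ?_⟩
        have := hfal (x, true) (Finset.mem_of_mem_erase hx1)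
        simp only [LitSat, Function.update_of_ne hxne]
        simpa using this
      · -- (x,true) ∈ c.erase (negLit l), (x,false) ∈ α.erase l
        have hxne : x ≠ l.1 := by
          intro hxl
          have h1 : (x, true) ≠ l := fun he => hcl (he ▸ Finset.mem_of_mem_erase hx1)
          have h2 : (x, true) ≠ negLit l := Finset.ne_of_mem_erase hx1
          rcases Bool.eq_false_or_eq_true l.2 with h | h
          · exact h1 (Prod.ext hxl h.symm)
          · exact h2 (Prod.ext hxl (by simp [negLit, h]))
        refine ⟨(x, true), Finset.mem_of_mem_erase hx1, ?_⟩
        have := hfal (x, false) (Finset.mem_of_mem_erase hx0)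
        simp only [LitSat, Function.update_of_ne hxne]
        simpa using this
      · rcases Bool.eq_false_or_eq_true (Function.update ω l.1 l.2 x) with h' | h'
        · exact ⟨(x, true), Finset.mem_of_mem_erase hx1, by simpa [LitSat] using h'⟩
        · exact ⟨(x, false), Finset.mem_of_mem_erase hx0, by simpa [LitSat] using h'⟩
    · rcases eq_or_ne c α with rfl | hne
      · exact absurd hl hcl
      obtain ⟨m, hm, hmv⟩ := hω c (Finset.mem_erase.mpr ⟨hne, hc⟩)
      have hmne : m.1 ≠ l.1 := by
        intro hml
        have h1 : m ≠ l := fun he => hcl (he ▸ hm)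
        have h2 : m ≠ negLit l := fun he => hcn (he ▸ hm)
        rcases Bool.eq_false_or_eq_true m.2 with h | h <;>
          rcases Bool.eq_false_or_eq_true l.2 with h3 | h3
        · exact h1 (Prod.ext hml (h.trans h3.symm))
        · exact h2 (Prod.ext hml (by simp [negLit, h, h3]))
        · exact h2 (Prod.ext hml (by simp [negLit, h, h3]))
        · exact h1 (Prod.ext hml (h.trans h3.symm))
      exact ⟨m, hm, by simpa [LitSat, Function.update_of_ne hmne] using hmv⟩

/-- If `Σ = Σ₀, Σ₁, …, Σₙ` is a sequence of CNF formulas where each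
`Σ_{i+1}` is obtained from `Σᵢ` by removing a non-tautological clause `αᵢ ∈ Σᵢ` blocked
in `Σᵢ` by a literal `ℓᵢ ∈ αᵢ` with `Var(ℓᵢ) ∈ X`, then `∃X.Σ` is logically equivalent
to `∃X.Σₙ`, and in particular the projected model count of `Σ` w.r.t. `X` equals that of
`Σₙ`. -/
theorem bce_chain_preserves_exists_and_count
    [Fintype V] (X : Finset V)
    (S : Finset (Finset (V × Bool)))
    (n : ℕ) (f : ℕ → Finset (Finset (V × Bool))) (h0 : f 0 = S)
    (hstep : ∀ i < n, ∃ α ∈ f i, ∃ l ∈ α,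
      ¬ Tauto α ∧ l.1 ∈ X ∧ Blocked (f i) α l ∧ f (i + 1) = (f i).erase α) :
    (∀ ω : V → Bool,
      (∃ ω' : V → Bool, (∀ v ∉ X, ω' v = ω v) ∧ CnfSat ω' S) ↔
      (∃ ω' : V → Bool, (∀ v ∉ X, ω' v = ω v) ∧ CnfSat ω' (f n))) ∧
    Nat.card {ω : {v : V // v ∉ X} → Bool //
        ∃ ω' : V → Bool, (∀ v : {v : V // v ∉ X}, ω' v = ω v) ∧ CnfSat ω' S} =
    Nat.card {ω : {v : V // v ∉ X} → Bool //
        ∃ ω' : V → Bool, (∀ v : {v : V // v ∉ X}, ω' v = ω v) ∧ CnfSat ω' (f n)} := by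

  have main : ∀ i ≤ n, ∀ ω : V → Bool,
      (∃ ω' : V → Bool, (∀ v ∉ X, ω' v = ω v) ∧ CnfSat ω' S) ↔
      (∃ ω' : V → Bool, (∀ v ∉ X, ω' v = ω v) ∧ CnfSat ω' (f i)) := by
    intro i
    induction i with
    | zero => intro _ ω; rw [h0]
    | succ i ih =>
      intro hi ω
      obtain ⟨α, hα, l, hl, ht, hlX, hb, hf⟩ := hstep i (Nat.lt_of_succ_le hi)
      rw [ih (Nat.le_of_succ_le hi) ω]
      constructor
      · rintro ⟨ω', hag, hsat⟩
        refine ⟨ω', hag, fun c hc => hsat c ?_⟩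
        rw [hf] at hc; exact Finset.mem_of_mem_erase hc
      · rintro ⟨ω', hag, hsat⟩
        rw [hf] at hsat
        obtain ⟨ω'', hag', hsat'⟩ := key_s8 hα hl ht hb ω' hsat
        refine ⟨ω'', fun v hv => ?_, hsat'⟩
        rw [hag' v (fun he => hv (he ▸ hlX)), hag v hv]
  refine ⟨main n le_rfl, Nat.card_congr (Equiv.subtypeEquivRight fun ω => ?_)⟩
  set ω0 : V → Bool := fun v => if h : v ∉ X then ω ⟨v, h⟩ else false with hω0
  have tr : ∀ T : Finset (Finset (V × Bool)),
      (∃ ω' : V → Bool, (∀ v : {v : V // v ∉ X}, ω' v = ω v) ∧ CnfSat ω' T) ↔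
      (∃ ω' : V → Bool, (∀ v ∉ X, ω' v = ω0 v) ∧ CnfSat ω' T) := by
    intro T
    constructor
    · rintro ⟨ω', hag, hs⟩
      exact ⟨ω', fun v hv => by rw [hag ⟨v, hv⟩, hω0]; simp [hv], hs⟩
    · rintro ⟨ω', hag, hs⟩
      refine ⟨ω', fun v => ?_, hs⟩
      rw [hag v.1 v.2, hω0]; simp [v.2]
  rw [tr S, tr (f n), main n le_rfl ω0]


end BCE
end
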